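/- arXiv:2211.04192 — 2 statements merged into one kernel-verified Lean document; each statement's English description precedes it below -/
import Mathlib

section
/- Let J ≥ 2 be a natural number, h > 0 and ε > 0, and let v : {0,1,…,J} → ℝ satisfy v(0) = v(J) = 0. For j = 1,…,J define the difference quotients δ_j = (v(j) − v(j−1))/h, and define the discrete Laplacian values Δ_j = (δ_{j+1} − δ_j)/h for j = 1,…,J−1 together with Δ_0 = Δ_J = 0. Then − Σ_{j=1}^{J} ( δ_j / √(δ_j² + ε²) ) · (Δ_j − Δ_{j−1}) ≥ 0. -/
open Finset

private lemma sqrt_aux (ε a b : ℝ) (hε : 0 < ε) (ha : 0 ≤ a) (hab : a ≤ b) :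
    a * Real.sqrt (b ^ 2 + ε ^ 2) ≤ b * Real.sqrt (a ^ 2 + ε ^ 2) := by
  have hb : 0 ≤ b := ha.trans hab
  have hsa : 0 ≤ Real.sqrt (a ^ 2 + ε ^ 2) := Real.sqrt_nonneg _
  have hsb : 0 ≤ Real.sqrt (b ^ 2 + ε ^ 2) := Real.sqrt_nonneg _
  have h1 : (a * Real.sqrt (b ^ 2 + ε ^ 2)) ^ 2 ≤ (b * Real.sqrt (a ^ 2 + ε ^ 2)) ^ 2 := by
    rw [mul_pow, mul_pow, Real.sq_sqrt (by positivity), Real.sq_sqrt (by positivity)]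
    nlinarith [mul_nonneg (mul_nonneg (sub_nonneg.2 hab) (by linarith : (0:ℝ) ≤ a + b))
      (mul_pos hε hε).le]
  nlinarith [mul_nonneg ha hsb, mul_nonneg hb hsa]

private lemma phi_mono (ε : ℝ) (hε : 0 < ε) {a b : ℝ} (hab : a ≤ b) :
    a / Real.sqrt (a ^ 2 + ε ^ 2) ≤ b / Real.sqrt (b ^ 2 + ε ^ 2) := by
  have hsa : 0 < Real.sqrt (a ^ 2 + ε ^ 2) := Real.sqrt_pos.mpr (by positivity)
  have hsb : 0 < Real.sqrt (b ^ 2 + ε ^ 2) := Real.sqrt_pos.mpr (by positivity)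
  rw [div_le_div_iff₀ hsa hsb]
  rcases le_total 0 a with ha | ha
  · exact sqrt_aux ε a b hε ha hab
  · rcases le_total b 0 with hb | hb
    · have := sqrt_aux ε (-b) (-a) hε (by linarith) (by linarith)
      rw [neg_sq, neg_sq] at this
      linarith
    · calc a * Real.sqrt (b ^ 2 + ε ^ 2) ≤ 0 :=
            mul_nonpos_of_nonpos_of_nonneg ha hsb.le
        _ ≤ b * Real.sqrt (a ^ 2 + ε ^ 2) := mul_nonneg hb hsa.le

/-- Discrete core of Lemma 3.1: nonnegativity of the lumped discrete
Laplacian pairing for a piecewise linear FE function with zero boundary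
values on a uniform 1d partition. -/
theorem stmt_0 (J : ℕ) (hJ : 2 ≤ J) (h ε : ℝ) (hh : 0 < h) (hε : 0 < ε)
    (v δ Δ : ℕ → ℝ) (hv0 : v 0 = 0) (hvJ : v J = 0)
    (hδ : ∀ j, 1 ≤ j → j ≤ J → δ j = (v j - v (j - 1)) / h)
    (hΔint : ∀ j, 1 ≤ j → j ≤ J - 1 → Δ j = (δ (j + 1) - δ j) / h)
    (hΔ0 : Δ 0 = 0) (hΔJ : Δ J = 0) :
    - ∑ j ∈ Finset.Icc 1 J,
        (δ j / Real.sqrt ((δ j) ^ 2 + ε ^ 2)) * (Δ j - Δ (j - 1)) ≥ 0 := by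
  obtain ⟨n, rfl⟩ : ∃ n, J = n + 2 := ⟨J - 2, by omega⟩
  set f : ℕ → ℝ := fun j => δ j / Real.sqrt ((δ j) ^ 2 + ε ^ 2) with hf
  have key : ∑ j ∈ Finset.Icc 1 (n + 2), f j * (Δ j - Δ (j - 1))
      = ∑ i ∈ Finset.range (n + 1), (f (i + 1) - f (i + 2)) * Δ (i + 1) := by
    rw [← Finset.Ico_add_one_right_eq_Icc, Finset.sum_Ico_eq_sum_range]
    have hterm : ∀ i, f (1 + i) * (Δ (1 + i) - Δ (1 + i - 1))
        = f (i + 1) * Δ (i + 1) - f (i + 1) * Δ i := by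
      intro i
      have h1 : 1 + i - 1 = i := by omega
      have h2 : 1 + i = i + 1 := by omega
      rw [h1, h2, mul_sub]
    simp only [show n + 2 + 1 - 1 = n + 2 from rfl, hterm]
    rw [Finset.sum_sub_distrib]
    have e1 : ∑ i ∈ Finset.range (n + 2), f (i + 1) * Δ (i + 1)
        = ∑ i ∈ Finset.range (n + 1), f (i + 1) * Δ (i + 1) := by
      rw [Finset.sum_range_succ]
      simp [hΔJ]
    have e2 : ∑ i ∈ Finset.range (n + 2), f (i + 1) * Δ i
        = ∑ i ∈ Finset.range (n + 1), f (i + 2) * Δ (i + 1) := by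
      rw [Finset.sum_range_succ']
      simp [hΔ0]
    rw [e1, e2, ← Finset.sum_sub_distrib]
    exact Finset.sum_congr rfl fun i _ => by ring
  rw [key, ← Finset.sum_neg_distrib]
  apply Finset.sum_nonneg
  intro i hi
  have hΔi : Δ (i + 1) = (δ (i + 2) - δ (i + 1)) / h := by
    have := hΔint (i + 1) (by omega) (by simp only [Finset.mem_range] at hi; omega)
    simpa using this
  rw [hΔi]
  have hmono : (f (i + 2) - f (i + 1)) * (δ (i + 2) - δ (i + 1)) ≥ 0 := by
    rcases le_total (δ (i + 1)) (δ (i + 2)) with hle | hle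
    · have h1 : f (i + 1) ≤ f (i + 2) := phi_mono ε hε hle
      nlinarith
    · have h1 : f (i + 2) ≤ f (i + 1) := phi_mono ε hε hle
      nlinarith
  have heq : -((f (i + 1) - f (i + 2)) * ((δ (i + 2) - δ (i + 1)) / h))
      = (f (i + 2) - f (i + 1)) * (δ (i + 2) - δ (i + 1)) / h := by ring
  rw [heq]
  positivity
end

section
/- Let J ≥ 2 be a natural number, h > 0, and let v, w : {0,1,…,J} → ℝ with v(0) = v(J) = w(0) = w(J) = 0. Set L = h · Σ_{j=1}^{J−1} v(j)·w(j) and E = (h/6) · Σ_{j=1}^{J} ( 2 v(j−1) w(j−1) + v(j−1) w(j) + v(j) w(j−1) + 2 v(j) w(j) ). Then | L − E | ≤ (h/6) · √( Σ_{j=1}^{J} (v(j) − v(j−1))² ) · √( Σ_{j=1}^{J} (w(j) − w(j−1))² ). -/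
open Finset

/-- Quadrature error bound between the mass-lumped inner product L and the
exact L² inner product E of piecewise linear FE functions with zero boundary
values. -/
theorem stmt_8 (J : ℕ) (hJ : 2 ≤ J) (h : ℝ) (hh : 0 < h) (v w : ℕ → ℝ)
    (hv0 : v 0 = 0) (hvJ : v J = 0) (hw0 : w 0 = 0) (hwJ : w J = 0) :
    |h * (∑ j ∈ Finset.Icc 1 (J - 1), v j * w j) -
        (h / 6) * ∑ j ∈ Finset.Icc 1 J,
          (2 * v (j - 1) * w (j - 1) + v (j - 1) * w j + v j * w (j - 1) +
            2 * v j * w j)| ≤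
      (h / 6) * Real.sqrt (∑ j ∈ Finset.Icc 1 J, (v j - v (j - 1)) ^ 2) *
        Real.sqrt (∑ j ∈ Finset.Icc 1 J, (w j - w (j - 1)) ^ 2) := by
  obtain ⟨n, rfl⟩ : ∃ n, J = n + 1 := ⟨J - 1, by omega⟩
  have hshift : ∀ (m : ℕ) (f : ℕ → ℝ),
      ∑ j ∈ Finset.Icc 1 m, f j = ∑ i ∈ Finset.range m, f (i + 1) := by
    intro m f
    rw [← Finset.Ico_add_one_right_eq_Icc, Finset.sum_Ico_eq_sum_range]
    have : m + 1 - 1 = m := by omega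
    rw [this]
    exact Finset.sum_congr rfl (fun i _ => by rw [Nat.add_comm])
  simp only [Nat.add_sub_cancel]
  rw [hshift n, hshift (n + 1), hshift (n + 1), hshift (n + 1)]
  simp only [Nat.add_sub_cancel]
  set S := ∑ i ∈ Finset.range n, v (i + 1) * w (i + 1) with hSdef
  set D := ∑ i ∈ Finset.range (n + 1), (v (i + 1) - v i) * (w (i + 1) - w i) with hDdef
  have key : h * S - (h / 6) * ∑ i ∈ Finset.range (n + 1),
      (2 * v i * w i + v i * w (i + 1) + v (i + 1) * w i + 2 * v (i + 1) * w (i + 1)) =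
      (h / 6) * D := by
    have hE : (∑ i ∈ Finset.range (n + 1),
        (2 * v i * w i + v i * w (i + 1) + v (i + 1) * w i + 2 * v (i + 1) * w (i + 1))) + D
        = 6 * S := by
      rw [hDdef, ← Finset.sum_add_distrib]
      have hterm : ∀ i, (2 * v i * w i + v i * w (i + 1) + v (i + 1) * w i
          + 2 * v (i + 1) * w (i + 1)) + (v (i + 1) - v i) * (w (i + 1) - w i)
          = 3 * (v i * w i) + 3 * (v (i + 1) * w (i + 1)) := fun i => by ring
      simp_rw [hterm]
      rw [Finset.sum_add_distrib, ← Finset.mul_sum, ← Finset.mul_sum,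
        Finset.sum_range_succ (fun i => v (i + 1) * w (i + 1)),
        Finset.sum_range_succ' (fun i => v i * w i)]
      simp only [hv0, hvJ, hw0, hwJ, zero_mul, mul_zero, add_zero]
      rw [← hSdef]; ring
    linear_combination (-(h / 6)) * hE
  rw [key]
  have hCS : D ^ 2 ≤ (∑ i ∈ Finset.range (n + 1), (v (i + 1) - v i) ^ 2) *
      (∑ i ∈ Finset.range (n + 1), (w (i + 1) - w i) ^ 2) := by
    rw [hDdef]
    exact Finset.sum_mul_sq_le_sq_mul_sq (Finset.range (n + 1))
      (fun i => v (i + 1) - v i) (fun i => w (i + 1) - w i)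
  have h6 : (0:ℝ) ≤ h / 6 := by linarith
  rw [abs_mul, abs_of_nonneg h6, mul_assoc]
  refine mul_le_mul_of_nonneg_left ?_ h6
  have : |D| = Real.sqrt (D ^ 2) := (Real.sqrt_sq_eq_abs D).symm
  rw [this, ← Real.sqrt_mul (by positivity)]
  exact Real.sqrt_le_sqrt hCS
end
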